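/- For every list xs : List Turn, interleaving rl distributes over the unfold step with middle element R: rl ▷ (xs ++ [R] ++ List.map inv (List.reverse xs)) = (rl ▷ xs) ++ [R] ++ List.map inv (List.reverse (rl ▷ xs)). -/

import Mathlib

inductive Turn : Type
  | L
  | R
deriving DecidableEq

open Turn

def inv : Turn → Turn
  | L => R
  | R => L

def interleave {α : Type*} : Stream' α → List α → List α
  | zs, [] => [zs.head]
  | zs, y :: ys => zs.head :: y :: interleave zs.tail ys

infixr:67 " ▷ " => interleave

def lr : Stream' Turn := fun n => if n % 2 = 0 then L else R

def rl : Stream' Turn := fun n => if n % 2 = 0 then R else L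

lemma interleave_congr {α : Type*} (xs : List α) :
    ∀ zs ws : Stream' α, (∀ k ≤ xs.length, zs k = ws k) → zs ▷ xs = ws ▷ xs := by
  induction xs with
  | nil =>
    intro zs ws h
    simp only [interleave]
    exact congrArg (fun a => [a]) (h 0 (by simp))
  | cons x xs ih =>
    intro zs ws h
    simp only [interleave]
    rw [show zs.head = ws.head from h 0 (by simp),
      ih zs.tail ws.tail (fun k hk => h (k + 1) (by simpa using Nat.succ_le_succ hk))]

lemma interleave_append {α : Type*} (xs : List α) :
    ∀ (zs : Stream' α) (y : α) (ys : List α),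
      zs ▷ (xs ++ y :: ys) = (zs ▷ xs) ++ y :: ((fun k => zs (k + xs.length + 1)) ▷ ys) := by
  induction xs with
  | nil => intro zs y ys; rfl
  | cons x xs ih =>
    intro zs y ys
    simp only [List.cons_append, interleave, List.length_cons]
    rw [ih]
    rfl

lemma map_interleave {α β : Type*} (f : α → β) (xs : List α) :
    ∀ zs : Stream' α, List.map f (zs ▷ xs) = (fun k => f (zs k)) ▷ List.map f xs := by
  induction xs with
  | nil => intro zs; rfl
  | cons x xs ih =>
    intro zs
    simp only [interleave, List.map_cons, ih]
    rfl

lemma reverse_interleave {α : Type*} (xs : List α) :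
    ∀ zs : Stream' α, (zs ▷ xs).reverse = (fun k => zs (xs.length - k)) ▷ xs.reverse := by
  induction xs with
  | nil => intro zs; rfl
  | cons x xs ih =>
    intro zs
    simp only [interleave, List.reverse_cons, ih, List.length_cons]
    erw [interleave_append]
    simp only [List.length_reverse, interleave, Stream'.head, Stream'.tail, Nat.zero_add,
      Nat.sub_self, List.append_assoc, List.cons_append, List.nil_append]
    congr 1
    · apply interleave_congr
      intro k hk
      simp only [List.length_reverse] at hk
      show zs (xs.length - k + 1) = zs (xs.length + 1 - k)
      congr 1
      omega
    · show [x, zs 0] = [x, zs (xs.length + 1 - (0 + xs.length + 1))]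
      simp

theorem interleave_rl_unfold_step (xs : List Turn) :
    rl ▷ (xs ++ [R] ++ List.map inv (List.reverse xs)) =
      (rl ▷ xs) ++ [R] ++ List.map inv (List.reverse (rl ▷ xs)) := by
  rw [List.append_assoc, List.singleton_append, interleave_append,
    reverse_interleave]
  erw [map_interleave]
  rw [List.append_assoc, List.singleton_append]
  congr 1
  congr 1
  apply interleave_congr
  intro k hk
  simp only [List.length_map, List.length_reverse] at hk
  by_cases h1 : (k + xs.length + 1) % 2 = 0 <;>
    by_cases h2 : (xs.length - k) % 2 = 0 <;>
      simp only [rl, inv, h1, h2, if_true, if_false, if_pos, if_neg, reduceIte] <;>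
        first | rfl | omega
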